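/- arXiv:1402.6886 — 8 statements merged into one kernel-verified Lean document; each statement's English description precedes it below -/
import Mathlib

section
/- Let n > r ≥ 2 be integers, let 0 ≤ a < b, and let λ : (a,b) → ℝ be twice differentiable with λ'(y) > 0 for all y ∈ (a,b), satisfying r·y·λ''(y) = (n−2r)·λ'(y) + (n−r)·y²·λ'(y)³ on (a,b). Then there exist constants c > 0 and k ∈ ℝ with b ≤ c^{r/(n−r)} such that λ(y) = (r/(n−r))·arcsin(y^{(n−r)/r}/c) + k for all y ∈ (a,b). -/
/-!
With `m = (n - r) / r` the equation reads `y λ'' = (m - 1) λ' + m y² λ'³`, i.e. `y u' = m u (1 + u²)`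
for `u = y λ'`. Hence `y^(2m) (u⁻² + 1)` is a first integral; writing its value as `c²` gives
`y^m < c` and `λ' = y^(m-1) / √(c² - y^(2m))`, the derivative of `m⁻¹ arcsin (y^m / c)`.
The bound `b ≤ c^(1/m)` is `y^m < c` in the limit `y → b`.
-/

open Real Set

theorem hasDerivAt_rpow_sq_mul_inv_sq_add_one {m y u' : ℝ} {u : ℝ → ℝ} (hy : 0 < y)
    (hu : u y ≠ 0) (hderiv : HasDerivAt u u' y) (hode : y * u' = m * u y * (1 + u y ^ 2)) :
    HasDerivAt (fun z => (z ^ m) ^ 2 * ((u z)⁻¹ ^ 2 + 1)) 0 y := by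
  have hpow := (hasDerivAt_rpow_const (p := m) (Or.inl hy.ne')).fun_pow 2
  have hinv := ((hderiv.fun_inv hu).fun_pow 2).add_const 1
  refine (hpow.mul hinv).congr_deriv ?_
  have hu' : u' = m * u y * (1 + u y ^ 2) / y := by rw [← hode]; field_simp
  rw [hu', rpow_sub_one hy.ne']
  simp only [Nat.cast_ofNat, Nat.add_one_sub_one, pow_one]
  field_simp
  ring

theorem hasDerivAt_inv_mul_arcsin_rpow_div {m c y : ℝ} (hm : m ≠ 0) (hy : 0 < y)
    (hyc : y ^ m < c) :
    HasDerivAt (fun z => m⁻¹ * arcsin (z ^ m / c)) (y ^ m / (y * √(c ^ 2 - (y ^ m) ^ 2))) y := by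
  have hs : 0 < y ^ m := rpow_pos_of_pos hy m
  have hc : 0 < c := hs.trans hyc
  have harcsin := hasDerivAt_arcsin (x := y ^ m / c) (by linarith [div_pos hs hc])
    ((div_lt_one hc).2 hyc).ne
  have hinner := (hasDerivAt_rpow_const (p := m) (Or.inl hy.ne')).div_const c
  refine ((harcsin.comp y hinner).const_mul m⁻¹).congr_deriv ?_
  have hsqrt : √(1 - (y ^ m / c) ^ 2) = √(c ^ 2 - (y ^ m) ^ 2) / c := by
    rw [← sqrt_sq hc.le, ← sqrt_div' _ (sq_nonneg c), sqrt_sq hc.le]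
    congr 1
    field_simp
  have hpos : 0 < √(c ^ 2 - (y ^ m) ^ 2) := sqrt_pos.2 (by nlinarith)
  rw [hsqrt, rpow_sub_one hy.ne']
  field_simp

theorem sqrt_sq_sub_sq_eq_div {s u c : ℝ} (hs : 0 < s) (hu : 0 < u)
    (h : s ^ 2 * (u⁻¹ ^ 2 + 1) = c ^ 2) : √(c ^ 2 - s ^ 2) = s / u := by
  rw [← h, ← sqrt_sq (div_pos hs hu).le]
  congr 1
  field_simp
  ring

theorem le_rpow_inv_of_forall_rpow_lt {a b c m : ℝ} (ha : 0 ≤ a) (hab : a < b) (hm : 0 < m)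
    (hc : 0 ≤ c) (h : ∀ y ∈ Ioo a b, y ^ m < c) : b ≤ c ^ m⁻¹ := by
  have hsub : Ioo a b ⊆ Iic (c ^ m⁻¹) := fun y hy =>
    ((lt_rpow_inv_iff_of_pos (ha.trans hy.1.le) hc hm).2 (h y hy)).le
  exact isClosed_Iic.closure_subset_iff.2 hsub (closure_Ioo hab.ne ▸ right_mem_Icc.2 hab.le)

theorem exists_sqrt_sq_sub_rpow_sq_eq_of_ode {m a b : ℝ} (ha : 0 ≤ a) (hab : a < b)
    {lam' lam'' : ℝ → ℝ}
    (hd2 : ∀ y ∈ Ioo a b, HasDerivAt lam' (lam'' y) y)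
    (hpos : ∀ y ∈ Ioo a b, 0 < lam' y)
    (hode : ∀ y ∈ Ioo a b, y * lam'' y = (m - 1) * lam' y + m * y ^ 2 * lam' y ^ 3) :
    ∃ c > 0, ∀ y ∈ Ioo a b, √(c ^ 2 - (y ^ m) ^ 2) = y ^ m / (y * lam' y) := by
  have hy0 : ∀ y ∈ Ioo a b, 0 < y := fun y hy => ha.trans_lt hy.1
  have hu : ∀ y ∈ Ioo a b, 0 < y * lam' y := fun y hy => mul_pos (hy0 y hy) (hpos y hy)
  have hfirst : ∀ y ∈ Ioo a b,
      HasDerivAt (fun z => (z ^ m) ^ 2 * ((z * lam' z)⁻¹ ^ 2 + 1)) 0 y := fun y hy =>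
    hasDerivAt_rpow_sq_mul_inv_sq_add_one (hy0 y hy) (hu y hy).ne'
      ((hasDerivAt_id y).mul (hd2 y hy)) (by simp only [id]; linear_combination y * hode y hy)
  obtain ⟨C, hC⟩ := isOpen_Ioo.exists_is_const_of_deriv_eq_zero isPreconnected_Ioo
    (fun y hy => (hfirst y hy).differentiableAt.differentiableWithinAt)
    (fun y hy => (hfirst y hy).deriv)
  obtain ⟨y₀, hy₀⟩ := nonempty_Ioo.2 hab
  have hC0 : 0 < C := by
    rw [← hC y₀ hy₀]
    have hs := rpow_pos_of_pos (hy0 y₀ hy₀) m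
    positivity
  refine ⟨√C, sqrt_pos.2 hC0, fun y hy => sqrt_sq_sub_sq_eq_div (rpow_pos_of_pos (hy0 y hy) m)
    (hu y hy) ?_⟩
  rw [sq_sqrt hC0.le]
  exact hC y hy

theorem eq_inv_mul_arcsin_rpow_div_add_of_ode {m a b : ℝ} (hm : 0 < m) (ha : 0 ≤ a) (hab : a < b)
    {lam lam' lam'' : ℝ → ℝ}
    (hd1 : ∀ y ∈ Ioo a b, HasDerivAt lam (lam' y) y)
    (hd2 : ∀ y ∈ Ioo a b, HasDerivAt lam' (lam'' y) y)
    (hpos : ∀ y ∈ Ioo a b, 0 < lam' y)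
    (hode : ∀ y ∈ Ioo a b, y * lam'' y = (m - 1) * lam' y + m * y ^ 2 * lam' y ^ 3) :
    ∃ c k : ℝ, 0 < c ∧ b ≤ c ^ m⁻¹ ∧
      ∀ y ∈ Ioo a b, lam y = m⁻¹ * arcsin (y ^ m / c) + k := by
  obtain ⟨c, hc, hsqrt⟩ := exists_sqrt_sq_sub_rpow_sq_eq_of_ode ha hab hd2 hpos hode
  have hy0 : ∀ y ∈ Ioo a b, 0 < y := fun y hy => ha.trans_lt hy.1
  have hlt : ∀ y ∈ Ioo a b, y ^ m < c := by
    intro y hy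
    have hs := rpow_pos_of_pos (hy0 y hy) m
    have : 0 < c ^ 2 - (y ^ m) ^ 2 :=
      sqrt_pos.1 (hsqrt y hy ▸ div_pos hs (mul_pos (hy0 y hy) (hpos y hy)))
    nlinarith
  have harcsin : ∀ y ∈ Ioo a b, HasDerivAt (fun z => m⁻¹ * arcsin (z ^ m / c)) (lam' y) y := by
    intro y hy
    convert hasDerivAt_inv_mul_arcsin_rpow_div hm.ne' (hy0 y hy) (hlt y hy) using 1
    have hyne := (hy0 y hy).ne'
    have hs := rpow_pos_of_pos (hy0 y hy) m
    rw [hsqrt y hy]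
    field_simp
  obtain ⟨k, hk⟩ := isOpen_Ioo.exists_eq_add_of_deriv_eq isPreconnected_Ioo
    (fun y hy => (hd1 y hy).differentiableAt.differentiableWithinAt)
    (fun y hy => (harcsin y hy).differentiableAt.differentiableWithinAt)
    (fun y hy => (hd1 y hy).deriv.trans (harcsin y hy).deriv.symm)
  exact ⟨c, k, hc, le_rpow_inv_of_forall_rpow_lt ha hab hm hc.le hlt, hk⟩

/-- For `n > r ≥ 2`, `0 ≤ a < b`, any increasing twice differentiable solution
`λ` on `(a,b)` of the profile ODE `r·y·λ'' = (n−2r)·λ' + (n−r)·y²·λ'³` is of the form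
`λ(y) = (r/(n−r))·arcsin(y^((n−r)/r)/c) + k` with `c > 0`, `b ≤ c^(r/(n−r))`. -/
theorem stmt1 (n r : ℕ) (hr : 2 ≤ r) (hnr : r < n) (a b : ℝ) (ha : 0 ≤ a) (hab : a < b)
    (lam lam' lam'' : ℝ → ℝ)
    (hd1 : ∀ y ∈ Set.Ioo a b, HasDerivAt lam (lam' y) y)
    (hd2 : ∀ y ∈ Set.Ioo a b, HasDerivAt lam' (lam'' y) y)
    (hpos : ∀ y ∈ Set.Ioo a b, 0 < lam' y)
    (hode : ∀ y ∈ Set.Ioo a b,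
      (r : ℝ) * y * lam'' y
        = ((n : ℝ) - 2 * r) * lam' y + ((n : ℝ) - r) * y ^ 2 * (lam' y) ^ 3) :
    ∃ c k : ℝ, 0 < c ∧ b ≤ c ^ ((r : ℝ) / ((n : ℝ) - r)) ∧
      ∀ y ∈ Set.Ioo a b,
        lam y = ((r : ℝ) / ((n : ℝ) - r)) * Real.arcsin (y ^ (((n : ℝ) - r) / r) / c) + k := by
  have hr0 : (0 : ℝ) < r := by exact_mod_cast (by omega : 0 < r)
  have hnr' : (r : ℝ) < n := by exact_mod_cast hnr
  rw [← inv_div]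
  refine eq_inv_mul_arcsin_rpow_div_add_of_ode (div_pos (by linarith) hr0) ha hab hd1 hd2 hpos
    fun y hy => ?_
  field_simp
  linear_combination hode y hy
end

section
/- Let c > 0 and l > 0, and define λ(y) = −√c·ln(√c + √(c − l²y²)) + √c·ln(l·y) + √(c − l²y²) for y ∈ (0, √c/l). Then λ is differentiable with λ'(y) = √(c − l²y²)/y for all y ∈ (0, √c/l), and consequently ((l² + λ'(y)²)·y²)/(1 + l²·y² + λ'(y)²·y²) = c/(1+c) is constant on (0, √c/l). -/
/-!
Write `a = √c` and `s = √(c - l²y²)`. The derivative of `λ` is `a/y - l²y/(a + s)`, and the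
relation `s² = a² - l²y²` turns this into `(a² + a s - l²y²) / (y (a + s)) = s (a + s) / (y (a + s)) = s/y`.
Hence `(l² + λ'²) y² = l²y² + s² = c`, and the ratio `(l² + λ'²) y² / (1 + (l² + λ'²) y²)` is `c/(1+c)`.
-/

open Real

lemma hasDerivAt_sqrt_sub_sq {c l y : ℝ} (hlt : l ^ 2 * y ^ 2 < c) :
    HasDerivAt (fun y => √(c - l ^ 2 * y ^ 2)) (-(l ^ 2 * y) / √(c - l ^ 2 * y ^ 2)) y := by
  have hinner : HasDerivAt (fun y : ℝ => c - l ^ 2 * y ^ 2) (-(l ^ 2 * (2 * y))) y := by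
    simpa using ((hasDerivAt_pow 2 y).const_mul (l ^ 2)).const_sub c
  convert hinner.sqrt (sub_pos.mpr hlt).ne' using 1
  ring

lemma hasDerivAt_parabolicScrewProfile {c l y : ℝ} (hl : l ≠ 0) (hy : y ≠ 0)
    (hlt : l ^ 2 * y ^ 2 < c) :
    HasDerivAt
      (fun y => -√c * log (√c + √(c - l ^ 2 * y ^ 2)) + √c * log (l * y) + √(c - l ^ 2 * y ^ 2))
      (√(c - l ^ 2 * y ^ 2) / y) y := by
  have hc : 0 < c := lt_of_le_of_lt (by positivity) hlt
  have hu : 0 < c - l ^ 2 * y ^ 2 := sub_pos.mpr hlt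
  have hsqrt := hasDerivAt_sqrt_sub_sq hlt
  have hlog₁ := ((hsqrt.const_add (√c)).log (by positivity)).const_mul (-√c)
  have hlog₂ := (((hasDerivAt_id' (x := y)).const_mul l).log (mul_ne_zero hl hy)).const_mul (√c)
  refine ((hlog₁.add hlog₂).add hsqrt).congr_deriv ?_
  have hs2 : √(c - l ^ 2 * y ^ 2) ^ 2 = c - l ^ 2 * y ^ 2 := sq_sqrt hu.le
  have ha2 : √c ^ 2 = c := sq_sqrt hc.le
  have hs : 0 < √(c - l ^ 2 * y ^ 2) := sqrt_pos.mpr hu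
  have ha : 0 < √c := sqrt_pos.mpr hc
  field_simp
  linear_combination √(c - l ^ 2 * y ^ 2) * (ha2 - hs2)

lemma sq_mul_sq_lt_of_mem_Ioo_sqrt_div {c l y : ℝ} (hy : y ∈ Set.Ioo 0 (√c / l)) :
    0 < l ∧ l ^ 2 * y ^ 2 < c := by
  obtain ⟨hy0, hy1⟩ := hy
  have hl : 0 < l := ((div_pos_iff.mp (hy0.trans hy1)).resolve_right
    fun h => (sqrt_nonneg c).not_gt h.1).2
  have hly : l * y < √c := by rw [mul_comm]; exact (lt_div_iff₀ hl).mp hy1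
  refine ⟨hl, ?_⟩
  rw [← mul_pow]
  exact (lt_sqrt (by positivity)).mp hly

lemma div_one_add_eq_of_mul_sq_eq {c l p y : ℝ} (h : (l ^ 2 + p ^ 2) * y ^ 2 = c) :
    ((l ^ 2 + p ^ 2) * y ^ 2) / (1 + l ^ 2 * y ^ 2 + p ^ 2 * y ^ 2) = c / (1 + c) := by
  rw [show 1 + l ^ 2 * y ^ 2 + p ^ 2 * y ^ 2 = 1 + (l ^ 2 + p ^ 2) * y ^ 2 by ring, h]

theorem stmt3_general (c l : ℝ)
    (lam : ℝ → ℝ)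
    (hlam : ∀ y : ℝ, lam y
      = -Real.sqrt c * Real.log (Real.sqrt c + Real.sqrt (c - l ^ 2 * y ^ 2))
        + Real.sqrt c * Real.log (l * y) + Real.sqrt (c - l ^ 2 * y ^ 2)) :
    ∀ y ∈ Set.Ioo (0 : ℝ) (Real.sqrt c / l),
      HasDerivAt lam (Real.sqrt (c - l ^ 2 * y ^ 2) / y) y ∧
      ((l ^ 2 + (Real.sqrt (c - l ^ 2 * y ^ 2) / y) ^ 2) * y ^ 2) /
          (1 + l ^ 2 * y ^ 2 + (Real.sqrt (c - l ^ 2 * y ^ 2) / y) ^ 2 * y ^ 2)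
        = c / (1 + c) := by
  intro y hy
  obtain ⟨hl, hlt⟩ := sq_mul_sq_lt_of_mem_Ioo_sqrt_div hy
  have hy0 : y ≠ 0 := hy.1.ne'
  refine ⟨?_, div_one_add_eq_of_mul_sq_eq ?_⟩
  · rw [show lam = _ from funext hlam]
    exact hasDerivAt_parabolicScrewProfile hl.ne' hy0 hlt
  · rw [div_pow, add_mul, div_mul_cancel₀ _ (pow_ne_zero 2 hy0), sq_sqrt (sub_pos.mpr hlt).le]
    ring

/-- For `c > 0`, `l > 0`, the function
`λ(y) = −√c·ln(√c + √(c − l²y²)) + √c·ln(l·y) + √(c − l²y²)` on `(0, √c/l)` has derivative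
`λ'(y) = √(c − l²y²)/y` and `((l² + λ'²)·y²)/(1 + l²y² + λ'²y²) = c/(1+c)` is constant. -/
theorem stmt3 (c l : ℝ) (hc : 0 < c) (hl : 0 < l)
    (lam : ℝ → ℝ)
    (hlam : ∀ y : ℝ, lam y
      = -Real.sqrt c * Real.log (Real.sqrt c + Real.sqrt (c - l ^ 2 * y ^ 2))
        + Real.sqrt c * Real.log (l * y) + Real.sqrt (c - l ^ 2 * y ^ 2)) :
    ∀ y ∈ Set.Ioo (0 : ℝ) (Real.sqrt c / l),
      HasDerivAt lam (Real.sqrt (c - l ^ 2 * y ^ 2) / y) y ∧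
      ((l ^ 2 + (Real.sqrt (c - l ^ 2 * y ^ 2) / y) ^ 2) * y ^ 2) /
          (1 + l ^ 2 * y ^ 2 + (Real.sqrt (c - l ^ 2 * y ^ 2) / y) ^ 2 * y ^ 2)
        = c / (1 + c) :=
  stmt3_general c l lam hlam
end

section
/- Let n > 2 be an integer and c ≠ 0 a real number, and set λ(y) = c·ln(y) for y > 0 and W(y)² = 1 + y²·λ'(y)² = 1 + c². Then for all y > 0: −(d/dy)[ y·(n−1)·λ'(y)²/W(y)² ] + (n−1)(n−3)·λ'(y)²/W(y)² = n(n−1)·k/y², where k = (n−2)·c²/(n·(1+c²)); moreover 0 < k < (n−2)/n. -/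
/-!
Since `λ' = c / y`, the product `y λ'` is the constant `c`, so `W² = 1 + c²` is constant and the
bracket `y (n−1) λ'² / W²` is `(n−1) c² / ((1 + c²) y)`. Its derivative is
`−(n−1) c² / ((1 + c²) y²)`, and adding `(n−1)(n−3) c² / ((1 + c²) y²)` leaves
`(n−1)(n−2) c² / ((1 + c²) y²) = n (n−1) k / y²`. Finally `0 < c² / (1 + c²) < 1` gives
`0 < k < (n−2)/n`.
-/

open Real

lemma hasDerivAt_const_mul_log (c : ℝ) {y : ℝ} (hy : y ≠ 0) :
    HasDerivAt (fun t : ℝ => c * log t) (c / y) y := by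
  simpa [div_eq_mul_inv] using (hasDerivAt_log hy).const_mul c

lemma hasDerivAt_mul_mul_div_sq_div (a b c : ℝ) {y : ℝ} (hy : y ≠ 0) :
    HasDerivAt (fun t : ℝ => t * a * (c / t) ^ 2 / b) (-(a * c ^ 2 / b) / y ^ 2) y := by
  have hinv : HasDerivAt (fun t : ℝ => a * c ^ 2 / b * t⁻¹) (a * c ^ 2 / b * -(y ^ 2)⁻¹) y :=
    (hasDerivAt_inv hy).const_mul _
  have hcongr : (fun t : ℝ => t * a * (c / t) ^ 2 / b) =ᶠ[nhds y]
      fun t : ℝ => a * c ^ 2 / b * t⁻¹ := by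
    filter_upwards [eventually_ne_nhds hy] with t ht
    field_simp
  exact (hinv.congr_of_eventuallyEq hcongr).congr_deriv (by ring)

lemma div_mul_one_add_sq_mem_Ioo {x c : ℝ} (hx : 2 < x) (hc : c ≠ 0) :
    0 < (x - 2) * c ^ 2 / (x * (1 + c ^ 2)) ∧
      (x - 2) * c ^ 2 / (x * (1 + c ^ 2)) < (x - 2) / x := by
  have hc2 : 0 < c ^ 2 := by positivity
  refine ⟨by apply div_pos <;> nlinarith, ?_⟩
  rw [div_lt_div_iff₀ (by positivity) (by linarith)]
  nlinarith [mul_pos (mul_pos (by linarith : 0 < x - 2) (by linarith : (0 : ℝ) < x)) hc2]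

/-- For `n > 2` and `c ≠ 0`, the graph `t = c·ln y` (with `λ'(y) = c/y`,
`W² = 1 + c²`) satisfies `−(d/dy)[y(n−1)λ'²/W²] + (n−1)(n−3)λ'²/W² = n(n−1)k/y²` for all
`y > 0`, where `k = (n−2)c²/(n(1+c²))`, and `0 < k < (n−2)/n`. -/
theorem stmt4 (n : ℕ) (hn : 2 < n) (c : ℝ) (hc : c ≠ 0) :
    0 < ((n : ℝ) - 2) * c ^ 2 / ((n : ℝ) * (1 + c ^ 2)) ∧
    ((n : ℝ) - 2) * c ^ 2 / ((n : ℝ) * (1 + c ^ 2)) < ((n : ℝ) - 2) / (n : ℝ) ∧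
    ∀ y : ℝ, 0 < y →
      HasDerivAt (fun t : ℝ => c * Real.log t) (c / y) y ∧
      1 + y ^ 2 * (c / y) ^ 2 = 1 + c ^ 2 ∧
      ∃ D : ℝ,
        HasDerivAt (fun t : ℝ => t * ((n : ℝ) - 1) * (c / t) ^ 2 / (1 + c ^ 2)) D y ∧
        -D + ((n : ℝ) - 1) * ((n : ℝ) - 3) * (c / y) ^ 2 / (1 + c ^ 2)
          = (n : ℝ) * ((n : ℝ) - 1) * (((n : ℝ) - 2) * c ^ 2 / ((n : ℝ) * (1 + c ^ 2))) / y ^ 2 := by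
  have hn2 : (2 : ℝ) < n := by exact_mod_cast hn
  refine ⟨(div_mul_one_add_sq_mem_Ioo hn2 hc).1, (div_mul_one_add_sq_mem_Ioo hn2 hc).2,
    fun y hy => ⟨hasDerivAt_const_mul_log c hy.ne', by field_simp, _,
      hasDerivAt_mul_mul_div_sq_div _ _ c hy.ne', ?_⟩⟩
  have hn0 : (n : ℝ) ≠ 0 := by positivity
  field_simp
  ring
end

section
/- Let n ≥ r ≥ 2 be integers, H > 0, and define I(ξ) = ∫₀^ξ sinh(s)^{n−1}/cosh(s)^{r−1} ds and q(ξ) = sinh(ξ)^{2(n−r)/r} − (n·H·I(ξ))^{2/r}. Suppose ρ̄ > 0 is such that q(ξ) > 0 for all ξ ∈ (0, ρ̄), and define λ(ρ) = ∫₀^ρ √( (n·H·I(ξ))^{2/r} / q(ξ) ) dξ for ρ ∈ (0, ρ̄). Then λ is differentiable on (0, ρ̄) and satisfies the first-integral identity sinh(ρ)^{n−r}·( λ'(ρ)² / (1 + λ'(ρ)²) )^{r/2} = n·H·I(ρ) for all ρ ∈ (0, ρ̄). -/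
/-!
The integrand `f = √((nHI)^(2/r) / q)` is continuous where `q > 0`, so the fundamental theorem of
calculus gives `λ' = f`, provided `f` is integrable at `0`, where `q` may vanish. There
`nH·I(ξ) ≤ nH·ξ·sinh ξ ^ (n-1)` is `o(sinh ξ ^ (n-r))`, hence `2·(nHI)^(2/r) ≤ sinh ξ ^ (2(n-r)/r)`
and `f ≤ 1`. The identity is then algebra: `λ'²/(1+λ'²) = (nHI)^(2/r) / sinh ^ (2(n-r)/r)`.
-/

open Real Set Filter Topology MeasureTheory

theorem intervalIntegrable_of_continuousOn_Ioc_of_bounded {E : Type*} [NormedAddCommGroup E]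
    {f : ℝ → E} {a b C : ℝ} (hf : ContinuousOn f (Ioc a b)) (hbd : ∀ᶠ t in 𝓝[>] a, ‖f t‖ ≤ C) (hab : a < b) :
    IntervalIntegrable f volume a b := by
  obtain ⟨u, hau, hu⟩ :=
    mem_nhdsGT_iff_exists_Ioc_subset.mp (hbd.and (Ioo_mem_nhdsGT hab))
  have hub : u < b := (hu ⟨hau, le_rfl⟩).2.2
  have hf_Ioc : IntegrableOn f (Ioc a u) :=
    ⟨(hf.mono (Ioc_subset_Ioc_right hub.le)).aestronglyMeasurable measurableSet_Ioc,
      .restrict_of_bounded (C := C) measure_Ioc_lt_top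
        ((ae_restrict_mem measurableSet_Ioc).mono fun t ht => (hu ht).1)⟩
  have hf_Icc : ContinuousOn f (uIcc u b) := by
    rw [uIcc_of_le hub.le]
    exact hf.mono (Icc_subset_Ioc_iff hub.le |>.mpr ⟨hau, le_rfl⟩)
  exact ((intervalIntegrable_iff_integrableOn_Ioc_of_le hau.le).mpr hf_Ioc).trans
    hf_Icc.intervalIntegrable

theorem hasDerivAt_integral_of_continuousOn_Ioo_of_bounded {E : Type*} [NormedAddCommGroup E]
    [NormedSpace ℝ E] [CompleteSpace E] {f : ℝ → E} {a c C x : ℝ}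
    (hf : ContinuousOn f (Ioo a c)) (hbd : ∀ᶠ t in 𝓝[>] a, ‖f t‖ ≤ C) (hx : x ∈ Ioo a c) :
    HasDerivAt (fun u => ∫ t in a..u, f t) (f x) x :=
  intervalIntegral.integral_hasDerivAt_right
    (intervalIntegrable_of_continuousOn_Ioc_of_bounded
      (hf.mono (Ioc_subset_Ioo_right hx.2)) hbd hx.1)
    (hf.stronglyMeasurableAtFilter isOpen_Ioo x hx) (hf.continuousAt (isOpen_Ioo.mem_nhds hx))

theorem continuous_sinh_rpow_div_cosh_rpow {a : ℝ} (ha : 0 ≤ a) (b : ℝ) :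
    Continuous fun s => sinh s ^ a / cosh s ^ b :=
  (continuous_sinh.rpow_const fun _ => Or.inr ha).div
    (continuous_cosh.rpow_const fun s => Or.inl (cosh_pos s).ne') fun s =>
    (rpow_pos_of_pos (cosh_pos s) b).ne'

theorem continuous_integral_sinh_rpow_div_cosh_rpow {a : ℝ} (ha : 0 ≤ a) (b : ℝ) :
    Continuous fun ξ => ∫ s in (0 : ℝ)..ξ, sinh s ^ a / cosh s ^ b :=
  intervalIntegral.continuous_primitive
    (fun _ _ => (continuous_sinh_rpow_div_cosh_rpow ha b).intervalIntegrable _ _) 0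

theorem integral_sinh_rpow_div_cosh_rpow_nonneg (a b : ℝ) {ξ : ℝ} (hξ : 0 ≤ ξ) :
    0 ≤ ∫ s in (0 : ℝ)..ξ, sinh s ^ a / cosh s ^ b :=
  intervalIntegral.integral_nonneg hξ fun s hs =>
    div_nonneg (rpow_nonneg (sinh_nonneg_iff.mpr hs.1) a) (rpow_pos_of_pos (cosh_pos s) b).le

theorem integral_sinh_rpow_div_cosh_rpow_le {a b ξ : ℝ} (ha : 0 ≤ a) (hb : 0 ≤ b) (hξ : 0 ≤ ξ) :
    ∫ s in (0 : ℝ)..ξ, sinh s ^ a / cosh s ^ b ≤ ξ * sinh ξ ^ a := by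
  have hle : ∀ s ∈ Icc 0 ξ, sinh s ^ a / cosh s ^ b ≤ sinh ξ ^ a := fun s hs =>
    calc sinh s ^ a / cosh s ^ b ≤ sinh s ^ a :=
          div_le_self (rpow_nonneg (sinh_nonneg_iff.mpr hs.1) a) (one_le_rpow (one_le_cosh s) hb)
      _ ≤ sinh ξ ^ a := rpow_le_rpow (sinh_nonneg_iff.mpr hs.1) (sinh_le_sinh.mpr hs.2) ha
  calc ∫ s in (0 : ℝ)..ξ, sinh s ^ a / cosh s ^ b ≤ ∫ _ in (0 : ℝ)..ξ, sinh ξ ^ a :=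
        intervalIntegral.integral_mono_on hξ
          ((continuous_sinh_rpow_div_cosh_rpow ha b).intervalIntegrable 0 ξ)
          intervalIntegrable_const hle
    _ = ξ * sinh ξ ^ a := by simp

/-- The integral is at most `ξ · sinh ξ ^ p = o(sinh ξ ^ m)` as `ξ → 0⁺`. -/
theorem eventually_mul_integral_sinh_rpow_div_cosh_rpow_le {p m b c : ℝ} (hp : 0 ≤ p)
    (hmp : m ≤ p) (hb : 0 ≤ b) (hc : 0 ≤ c) :
    ∀ᶠ ξ in 𝓝[>] 0, c * ∫ s in (0 : ℝ)..ξ, sinh s ^ p / cosh s ^ b ≤ sinh ξ ^ m := by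
  have hcont : Continuous fun ξ => c * ξ * sinh ξ ^ (p - m) :=
    (continuous_const.mul continuous_id).mul
      (continuous_sinh.rpow_const fun _ => Or.inr (sub_nonneg.mpr hmp))
  have hsmall : ∀ᶠ ξ in 𝓝[>] 0, c * ξ * sinh ξ ^ (p - m) ≤ 1 :=
    nhdsWithin_le_nhds <| (hcont.continuousAt.eventually_lt continuousAt_const
      (by simp)).mono fun _ => le_of_lt
  filter_upwards [hsmall, self_mem_nhdsWithin] with ξ hξ (hξ0 : 0 < ξ)
  have hsinh : 0 < sinh ξ := sinh_pos_iff.mpr hξ0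
  calc c * ∫ s in (0 : ℝ)..ξ, sinh s ^ p / cosh s ^ b ≤ c * (ξ * sinh ξ ^ p) :=
        mul_le_mul_of_nonneg_left (integral_sinh_rpow_div_cosh_rpow_le hp hb hξ0.le) hc
    _ = c * ξ * sinh ξ ^ (p - m) * sinh ξ ^ m := by
        rw [mul_assoc, mul_assoc, ← rpow_add hsinh, sub_add_cancel]
    _ ≤ sinh ξ ^ m := mul_le_of_le_one_left (rpow_pos_of_pos hsinh m).le hξ

theorem sqrt_div_sub_le_one {A S : ℝ} (hA : 0 ≤ A) (h : 2 * A ≤ S) : √(A / (S - A)) ≤ 1 :=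
  sqrt_le_one.mpr (div_le_one_of_le₀ (by linarith) (by linarith))

theorem sq_sqrt_div_sub_div_one_add {A S : ℝ} (hA : 0 ≤ A) (h : A < S) :
    √(A / (S - A)) ^ 2 / (1 + √(A / (S - A)) ^ 2) = A / S := by
  have hSA : 0 < S - A := sub_pos.mpr h
  have hS : 0 < S := hA.trans_lt h
  rw [sq_sqrt (div_nonneg hA hSA.le)]
  field_simp
  ring

theorem two_mul_rpow_two_div_le {B T r : ℝ} (hB : 0 ≤ B) (hr : 0 < r) (h : 2 ^ (r / 2) * B ≤ T) :
    2 * B ^ (2 / r) ≤ T ^ (2 / r) := by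
  have h2 : ((2 : ℝ) ^ (r / 2)) ^ (2 / r) = 2 := by
    rw [← rpow_mul zero_le_two, show r / 2 * (2 / r) = 1 by field_simp, rpow_one]
  calc 2 * B ^ (2 / r) = (2 ^ (r / 2) * B) ^ (2 / r) := by
        rw [mul_rpow (by positivity) hB, h2]
    _ ≤ T ^ (2 / r) := rpow_le_rpow (by positivity) h (by positivity)

theorem mul_rpow_two_div_div_rpow_two_div {B T r : ℝ} (hB : 0 ≤ B) (hT : 0 < T) (hr : r ≠ 0) :
    T * (B ^ (2 / r) / T ^ (2 / r)) ^ (r / 2) = B := by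
  have hinv : 2 / r * (r / 2) = 1 := by field_simp
  rw [div_rpow (rpow_nonneg hB _) (rpow_nonneg hT.le _), ← rpow_mul hB, ← rpow_mul hT.le, hinv,
    rpow_one, rpow_one, mul_div_cancel₀ _ hT.ne']

theorem stmt5_general (n r : ℕ) (hr : 2 ≤ r) (hn : r ≤ n) (H : ℝ) (hH : 0 < H)
    (ρbar : ℝ) (I q lam : ℝ → ℝ)
    (hI : ∀ ξ : ℝ, I ξ
      = ∫ s in (0 : ℝ)..ξ, Real.sinh s ^ ((n : ℝ) - 1) / Real.cosh s ^ ((r : ℝ) - 1))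
    (hq : ∀ ξ : ℝ, q ξ
      = Real.sinh ξ ^ (2 * ((n : ℝ) - r) / r) - ((n : ℝ) * H * I ξ) ^ (2 / (r : ℝ)))
    (hqpos : ∀ ξ ∈ Set.Ioo (0 : ℝ) ρbar, 0 < q ξ)
    (hlam : ∀ ρ : ℝ, lam ρ
      = ∫ ξ in (0 : ℝ)..ρ, Real.sqrt ((((n : ℝ) * H * I ξ) ^ (2 / (r : ℝ))) / q ξ)) :
    ∀ ρ ∈ Set.Ioo (0 : ℝ) ρbar, ∃ d : ℝ, HasDerivAt lam d ρ ∧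
      Real.sinh ρ ^ ((n : ℝ) - r) * (d ^ 2 / (1 + d ^ 2)) ^ ((r : ℝ) / 2)
        = (n : ℝ) * H * I ρ := by
  intro ρ hρ
  have hr1 : (1 : ℝ) ≤ r := by exact_mod_cast one_le_two.trans hr
  have hrn : (r : ℝ) ≤ n := by exact_mod_cast hn
  have hB : ∀ ξ, 0 ≤ ξ → 0 ≤ (n : ℝ) * H * I ξ := fun ξ hξ =>
    mul_nonneg (by positivity) ((hI ξ).symm ▸ integral_sinh_rpow_div_cosh_rpow_nonneg _ _ hξ)
  have hsinh : ∀ ξ, 0 ≤ ξ →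
      sinh ξ ^ (2 * ((n : ℝ) - r) / r) = (sinh ξ ^ ((n : ℝ) - r)) ^ (2 / (r : ℝ)) := fun ξ hξ => by
    rw [← rpow_mul (sinh_nonneg_iff.mpr hξ)]; ring_nf
  have hIcont : Continuous I :=
    funext hI ▸ continuous_integral_sinh_rpow_div_cosh_rpow (by linarith) _
  have hAcont : Continuous fun ξ => ((n : ℝ) * H * I ξ) ^ (2 / (r : ℝ)) :=
    (continuous_const.mul hIcont).rpow_const fun _ => Or.inr (by positivity)
  have hqcont : Continuous q := by
    rw [funext hq]
    exact (continuous_sinh.rpow_const fun _ => Or.inr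
      (div_nonneg (by linarith) (by linarith))).sub hAcont
  set f : ℝ → ℝ := fun ξ => √(((n : ℝ) * H * I ξ) ^ (2 / (r : ℝ)) / q ξ)
  have hf_cont : ContinuousOn f (Ioo 0 ρbar) := fun ξ hξ =>
    (continuous_sqrt.continuousAt.comp
      (hAcont.continuousAt.div hqcont.continuousAt (hqpos ξ hξ).ne')).continuousWithinAt
  have hf_bdd : ∀ᶠ ξ in 𝓝[>] 0, ‖f ξ‖ ≤ 1 := by
    filter_upwards [eventually_mul_integral_sinh_rpow_div_cosh_rpow_le (p := n - 1) (m := n - r)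
      (b := r - 1) (c := 2 ^ ((r : ℝ) / 2) * (n * H)) (by linarith) (by linarith) (by linarith)
      (by positivity), self_mem_nhdsWithin] with ξ hle (hξ : 0 < ξ)
    rw [← hI, mul_assoc] at hle
    rw [norm_of_nonneg (sqrt_nonneg _), hq, hsinh ξ hξ.le]
    exact sqrt_div_sub_le_one (rpow_nonneg (hB ξ hξ.le) _)
      (two_mul_rpow_two_div_le (hB ξ hξ.le) (by positivity) hle)
  refine ⟨f ρ, funext hlam ▸
    hasDerivAt_integral_of_continuousOn_Ioo_of_bounded hf_cont hf_bdd hρ, ?_⟩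
  have hqρ := hqpos ρ hρ
  rw [hq, hsinh ρ hρ.1.le, sub_pos] at hqρ
  simp only [f]
  rw [hq, hsinh ρ hρ.1.le, sq_sqrt_div_sub_div_one_add (rpow_nonneg (hB ρ hρ.1.le) _) hqρ,
    mul_rpow_two_div_div_rpow_two_div (hB ρ hρ.1.le) (rpow_pos_of_pos (sinh_pos_iff.mpr hρ.1) _)
      (by positivity)]

/-- the rotational profile `λ(ρ) = ∫₀^ρ √((nHI)^(2/r)/q)` is differentiable on
`(0, ρ̄)` (where `q > 0`) and satisfies the first integral identity
`sinh(ρ)^(n−r)·(λ'²/(1+λ'²))^(r/2) = nH·I(ρ)`. -/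
theorem stmt5 (n r : ℕ) (hr : 2 ≤ r) (hn : r ≤ n) (H : ℝ) (hH : 0 < H)
    (ρbar : ℝ) (hρbar : 0 < ρbar) (I q lam : ℝ → ℝ)
    (hI : ∀ ξ : ℝ, I ξ
      = ∫ s in (0 : ℝ)..ξ, Real.sinh s ^ ((n : ℝ) - 1) / Real.cosh s ^ ((r : ℝ) - 1))
    (hq : ∀ ξ : ℝ, q ξ
      = Real.sinh ξ ^ (2 * ((n : ℝ) - r) / r) - ((n : ℝ) * H * I ξ) ^ (2 / (r : ℝ)))
    (hqpos : ∀ ξ ∈ Set.Ioo (0 : ℝ) ρbar, 0 < q ξ)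
    (hlam : ∀ ρ : ℝ, lam ρ
      = ∫ ξ in (0 : ℝ)..ρ, Real.sqrt ((((n : ℝ) * H * I ξ) ^ (2 / (r : ℝ))) / q ξ)) :
    ∀ ρ ∈ Set.Ioo (0 : ℝ) ρbar, ∃ d : ℝ, HasDerivAt lam d ρ ∧
      Real.sinh ρ ^ ((n : ℝ) - r) * (d ^ 2 / (1 + d ^ 2)) ^ ((r : ℝ) / 2)
        = (n : ℝ) * H * I ρ :=
  stmt5_general n r hr hn H hH ρbar I q lam hI hq hqpos hlam
end

section
/- Let n ≥ r ≥ 2 be integers, H > 0, I(ξ) = ∫₀^ξ sinh(s)^{n−1}/cosh(s)^{r−1} ds, q(ξ) = sinh(ξ)^{2(n−r)/r} − (n·H·I(ξ))^{2/r}, and suppose q(ξ) > 0 for all ξ ∈ (0, ρ̄) for some ρ̄ > 0. Then the function λ(ρ) = ∫₀^ρ √( (n·H·I(ξ))^{2/r} / q(ξ) ) dξ is twice differentiable on (0, ρ̄) with λ'(ρ) > 0 and λ''(ρ) > 0 for every ρ ∈ (0, ρ̄). -/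
/-!
Write `λ' = √f` with `f = A / (S - A)`, `A = (n H I)^(2/r)`, `S = sinh^(2(n-r)/r)`. Since
`f(0) = 0` and `f > 0`, it suffices that `f' > 0`: then `√f` is monotone, hence integrable down
to `0`, and `λ'' = f' / (2√f)`. As `S - A = q > 0`, the sign of `f'` is that of `A'S - AS'`,
i.e. of `A'/A - S'/S`, which after cancelling reduces to `(n - r) I cosh < sinh^n / cosh^(r-1)`.
This holds because `sinh^n / cosh^r - (n - r) I` vanishes at `0` and has derivative
`r sinh^(n-1) / cosh^(r+1) > 0`.
-/

open Real Set

noncomputable section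

def profileIntegrand (n r s : ℝ) : ℝ := sinh s ^ (n - 1) / cosh s ^ (r - 1)

def profileIntegral (n r ξ : ℝ) : ℝ := ∫ s in (0 : ℝ)..ξ, profileIntegrand n r s

/-- `λ'²`, the square of the slope of the profile curve `t = λ(ρ)`. -/
def profileSlopeSq (n r H ξ : ℝ) : ℝ :=
  (n * H * profileIntegral n r ξ) ^ (2 / r) /
    (sinh ξ ^ (2 * (n - r) / r) - (n * H * profileIntegral n r ξ) ^ (2 / r))

theorem HasDerivAt.div_sub_self {A S : ℝ → ℝ} {A' S' x : ℝ} (hA : HasDerivAt A A' x)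
    (hS : HasDerivAt S S' x) (hx : S x - A x ≠ 0) :
    HasDerivAt (fun t => A t / (S t - A t)) ((A' * S x - A x * S') / (S x - A x) ^ 2) x :=
  hA.fun_div (hS.fun_sub hA) hx |>.congr_deriv (by ring)

theorem hasDerivAt_integral_of_monotoneOn {h : ℝ → ℝ} {a b ρ : ℝ} (hmono : MonotoneOn h (Ico a b))
    (hcont : ContinuousOn h (Ioo a b)) (hρ : ρ ∈ Ioo a b) :
    HasDerivAt (fun u => ∫ ξ in a..u, h ξ) (h ρ) ρ :=
  intervalIntegral.integral_hasDerivAt_right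
    ((hmono.mono (uIcc_of_le hρ.1.le ▸ Icc_subset_Ico_right hρ.2)).intervalIntegrable)
    (hcont.stronglyMeasurableAtFilter isOpen_Ioo ρ hρ) (hcont.continuousAt (Ioo_mem_nhds hρ.1 hρ.2))

theorem exists_hasDerivAt_integral_sqrt_pos {f : ℝ → ℝ} {b : ℝ} (hf₀ : f 0 = 0)
    (hf : ∀ x ∈ Ioo 0 b, 0 < f x ∧ ∃ d, HasDerivAt f d x ∧ 0 < d) :
    ∃ g g' : ℝ → ℝ, ∀ ρ ∈ Ioo 0 b, HasDerivAt (fun u => ∫ ξ in (0 : ℝ)..u, √(f ξ)) (g ρ) ρ ∧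
      HasDerivAt g (g' ρ) ρ ∧ 0 < g ρ ∧ 0 < g' ρ := by
  have hf_mono : StrictMonoOn f (Ioo 0 b) :=
    strictMonoOn_of_deriv_pos (convex_Ioo 0 b)
      (fun x hx => ((hf x hx).2.choose_spec.1.continuousAt).continuousWithinAt) fun x hx => by
        rw [interior_Ioo] at hx
        obtain ⟨-, d, hd, hd₀⟩ := hf x hx
        rwa [hd.deriv]
  have hsqrt_mono : MonotoneOn (fun x => √(f x)) (Ico 0 b) := by
    intro x hx y hy hxy
    rcases hx.1.eq_or_lt with rfl | hx₀
    · simp [hf₀]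
    · exact sqrt_le_sqrt (hf_mono.monotoneOn ⟨hx₀, hx.2⟩ ⟨hx₀.trans_le hxy, hy.2⟩ hxy)
  have hsqrt_cont : ContinuousOn (fun x => √(f x)) (Ioo 0 b) := fun x hx =>
    (hf x hx).2.choose_spec.1.continuousAt.sqrt.continuousWithinAt
  refine ⟨fun x => √(f x), fun x => deriv f x / (2 * √(f x)), fun ρ hρ => ?_⟩
  obtain ⟨hfρ, d, hd, hd₀⟩ := hf ρ hρ
  simp only [hd.deriv]
  exact ⟨hasDerivAt_integral_of_monotoneOn hsqrt_mono hsqrt_cont hρ, hd.sqrt hfρ.ne',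
    sqrt_pos.mpr hfρ, by positivity⟩

variable {n r : ℝ}

theorem continuous_profileIntegrand (hn : 1 ≤ n) : Continuous (profileIntegrand n r) :=
  (continuous_sinh.rpow_const fun _ => Or.inr (by linarith)).div
    (continuous_cosh.rpow_const fun s => Or.inl (cosh_pos s).ne')
    fun s => (rpow_pos_of_pos (cosh_pos s) _).ne'

theorem profileIntegrand_pos {s : ℝ} (hs : 0 < s) : 0 < profileIntegrand n r s :=
  div_pos (rpow_pos_of_pos (sinh_pos_iff.mpr hs) _) (rpow_pos_of_pos (cosh_pos s) _)

@[simp]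
theorem profileIntegral_zero : profileIntegral n r 0 = 0 :=
  intervalIntegral.integral_same

theorem hasDerivAt_profileIntegral (hn : 1 ≤ n) (ξ : ℝ) :
    HasDerivAt (profileIntegral n r) (profileIntegrand n r ξ) ξ :=
  have hc := continuous_profileIntegrand (r := r) hn
  intervalIntegral.integral_hasDerivAt_right (hc.intervalIntegrable 0 ξ)
    hc.stronglyMeasurable.stronglyMeasurableAtFilter hc.continuousAt

theorem continuous_profileIntegral (hn : 1 ≤ n) : Continuous (profileIntegral n r) :=
  continuous_iff_continuousAt.mpr fun ξ => (hasDerivAt_profileIntegral hn ξ).continuousAt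

theorem profileIntegral_pos (hn : 1 ≤ n) {ξ : ℝ} (hξ : 0 < ξ) : 0 < profileIntegral n r ξ :=
  intervalIntegral.intervalIntegral_pos_of_pos_on
    ((continuous_profileIntegrand hn).intervalIntegrable 0 ξ)
    (fun _ hs => profileIntegrand_pos hs.1) hξ

theorem hasDerivAt_sinh_rpow_div_cosh_rpow {x : ℝ} (hx : 0 < x) :
    HasDerivAt (fun t => sinh t ^ n / cosh t ^ r)
      ((n - r) * profileIntegrand n r x + r * (sinh x ^ (n - 1) / cosh x ^ (r + 1))) x := by
  have hs := sinh_pos_iff.mpr hx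
  have hc := cosh_pos x
  refine ((hasDerivAt_sinh x).rpow_const (p := n) (Or.inl hs.ne')).fun_div
    ((hasDerivAt_cosh x).rpow_const (p := r) (Or.inl hc.ne')) (rpow_pos_of_pos hc r).ne'
    |>.congr_deriv ?_
  rw [profileIntegrand, rpow_sub_one hs.ne', rpow_sub_one hc.ne', rpow_add hc, rpow_one]
  have := cosh_sq_sub_sinh_sq x
  field_simp
  linear_combination r * this

theorem sub_mul_profileIntegral_lt (hn : 1 ≤ n) (hr : 0 < r) {ξ : ℝ} (hξ : 0 < ξ) :
    (n - r) * profileIntegral n r ξ < sinh ξ ^ n / cosh ξ ^ r := by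
  set φ : ℝ → ℝ := fun t => sinh t ^ n / cosh t ^ r - (n - r) * profileIntegral n r t
  have hφ_cont : Continuous φ :=
    ((continuous_sinh.rpow_const fun _ => Or.inr (by linarith)).div
      (continuous_cosh.rpow_const fun s => Or.inl (cosh_pos s).ne')
      fun s => (rpow_pos_of_pos (cosh_pos s) _).ne').sub
    (continuous_const.mul (continuous_profileIntegral hn))
  have hφ_deriv : ∀ x ∈ interior (Icc 0 ξ),
      HasDerivAt φ (r * (sinh x ^ (n - 1) / cosh x ^ (r + 1))) x := by
    intro x hx
    rw [interior_Icc] at hx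
    refine (hasDerivAt_sinh_rpow_div_cosh_rpow hx.1).fun_sub
      ((hasDerivAt_profileIntegral hn x).const_mul (n - r)) |>.congr_deriv (by ring)
  have hφ_mono : StrictMonoOn φ (Icc 0 ξ) :=
    strictMonoOn_of_hasDerivWithinAt_pos (convex_Icc 0 ξ) hφ_cont.continuousOn
      (fun x hx => (hφ_deriv x hx).hasDerivWithinAt) fun x hx => by
        rw [interior_Icc] at hx
        have hs := sinh_pos_iff.mpr hx.1
        have hc := cosh_pos x
        positivity
  have hφ_zero : φ 0 = 0 := by
    simp [φ, zero_rpow (by linarith : n ≠ 0)]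
  have := hφ_mono (left_mem_Icc.mpr hξ.le) (right_mem_Icc.mpr hξ.le) hξ
  simp only [hφ_zero, φ] at this
  linarith

theorem exists_hasDerivAt_profileSlopeSq_pos (hn : 1 ≤ n) (hr : 0 < r) {H ξ : ℝ} (hH : 0 < H)
    (hξ : 0 < ξ)
    (hq : 0 < sinh ξ ^ (2 * (n - r) / r) - (n * H * profileIntegral n r ξ) ^ (2 / r)) :
    ∃ d, HasDerivAt (profileSlopeSq n r H) d ξ ∧ 0 < d := by
  have hI := profileIntegral_pos (r := r) hn hξ
  set J := n * H * profileIntegral n r ξ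
  have hJ : 0 < J := by positivity
  have hs := sinh_pos_iff.mpr hξ
  have hc := cosh_pos ξ
  have hA := ((hasDerivAt_profileIntegral (r := r) hn ξ).const_mul (n * H)).rpow_const
    (p := 2 / r) (Or.inl hJ.ne')
  have hS := (hasDerivAt_sinh ξ).rpow_const (p := 2 * (n - r) / r) (Or.inl hs.ne')
  refine ⟨_, hA.div_sub_self hS hq.ne', div_pos (sub_pos.mpr ?_) (by positivity)⟩
  have key : (n - r) * profileIntegral n r ξ * cosh ξ < profileIntegrand n r ξ * sinh ξ := by
    refine (mul_lt_mul_of_pos_right (sub_mul_profileIntegral_lt hn hr hξ) hc).trans_eq ?_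
    rw [profileIntegrand, rpow_sub_one hs.ne', rpow_sub_one hc.ne']
    field_simp
  rw [rpow_sub_one hJ.ne', rpow_sub_one hs.ne']
  have hSm : 0 < sinh ξ ^ (2 * (n - r) / r) := rpow_pos_of_pos hs _
  have hJr : 0 < J ^ (2 / r) := rpow_pos_of_pos hJ _
  calc _ = 2 * J ^ (2 / r) * sinh ξ ^ (2 * (n - r) / r) / (r * J * sinh ξ) * (n * H)
          * ((n - r) * profileIntegral n r ξ * cosh ξ) := by
        simp only [J]; field_simp
    _ < 2 * J ^ (2 / r) * sinh ξ ^ (2 * (n - r) / r) / (r * J * sinh ξ) * (n * H)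
          * (profileIntegrand n r ξ * sinh ξ) := by gcongr
    _ = _ := by simp only [J]; field_simp

theorem profileSlopeSq_zero (hr : r ≠ 0) (H : ℝ) : profileSlopeSq n r H 0 = 0 := by
  simp [profileSlopeSq, zero_rpow (div_ne_zero two_ne_zero hr)]

end

theorem stmt6_general (n r : ℕ) (hr : 2 ≤ r) (hn : r ≤ n) (H : ℝ) (hH : 0 < H)
    (ρbar : ℝ) (I q lam : ℝ → ℝ)
    (hI : ∀ ξ : ℝ, I ξ
      = ∫ s in (0 : ℝ)..ξ, Real.sinh s ^ ((n : ℝ) - 1) / Real.cosh s ^ ((r : ℝ) - 1))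
    (hq : ∀ ξ : ℝ, q ξ
      = Real.sinh ξ ^ (2 * ((n : ℝ) - r) / r) - ((n : ℝ) * H * I ξ) ^ (2 / (r : ℝ)))
    (hqpos : ∀ ξ ∈ Set.Ioo (0 : ℝ) ρbar, 0 < q ξ)
    (hlam : ∀ ρ : ℝ, lam ρ
      = ∫ ξ in (0 : ℝ)..ρ, Real.sqrt ((((n : ℝ) * H * I ξ) ^ (2 / (r : ℝ))) / q ξ)) :
    ∃ lam' lam'' : ℝ → ℝ, ∀ ρ ∈ Set.Ioo (0 : ℝ) ρbar,
      HasDerivAt lam (lam' ρ) ρ ∧ HasDerivAt lam' (lam'' ρ) ρ ∧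
      0 < lam' ρ ∧ 0 < lam'' ρ := by
  have hr₀ : (0 : ℝ) < r := by exact_mod_cast (by omega : 0 < r)
  have hn₁ : (1 : ℝ) ≤ n := by exact_mod_cast (by omega : 1 ≤ n)
  obtain rfl : I = profileIntegral n r := funext hI
  obtain rfl : lam = fun ρ => ∫ ξ in (0 : ℝ)..ρ, √(profileSlopeSq n r H ξ) :=
    funext fun ρ => by simp only [hlam, hq, profileSlopeSq]
  refine exists_hasDerivAt_integral_sqrt_pos (profileSlopeSq_zero hr₀.ne' H) fun ξ hξ => ?_
  have hqξ := hq ξ ▸ hqpos ξ hξ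
  have hI := profileIntegral_pos (r := r) hn₁ hξ.1
  exact ⟨div_pos (by positivity) hqξ, exists_hasDerivAt_profileSlopeSq_pos hn₁ hr₀ hH hξ.1 hqξ⟩

/-- the rotational profile `λ(ρ) = ∫₀^ρ √((nHI)^(2/r)/q)` is twice differentiable
on `(0, ρ̄)` (where `q > 0`) with `λ' > 0` and `λ'' > 0` there. -/
theorem stmt6 (n r : ℕ) (hr : 2 ≤ r) (hn : r ≤ n) (H : ℝ) (hH : 0 < H)
    (ρbar : ℝ) (hρbar : 0 < ρbar) (I q lam : ℝ → ℝ)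
    (hI : ∀ ξ : ℝ, I ξ
      = ∫ s in (0 : ℝ)..ξ, Real.sinh s ^ ((n : ℝ) - 1) / Real.cosh s ^ ((r : ℝ) - 1))
    (hq : ∀ ξ : ℝ, q ξ
      = Real.sinh ξ ^ (2 * ((n : ℝ) - r) / r) - ((n : ℝ) * H * I ξ) ^ (2 / (r : ℝ)))
    (hqpos : ∀ ξ ∈ Set.Ioo (0 : ℝ) ρbar, 0 < q ξ)
    (hlam : ∀ ρ : ℝ, lam ρ
      = ∫ ξ in (0 : ℝ)..ρ, Real.sqrt ((((n : ℝ) * H * I ξ) ^ (2 / (r : ℝ))) / q ξ)) :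
    ∃ lam' lam'' : ℝ → ℝ, ∀ ρ ∈ Set.Ioo (0 : ℝ) ρbar,
      HasDerivAt lam (lam' ρ) ρ ∧ HasDerivAt lam' (lam'' ρ) ρ ∧
      0 < lam' ρ ∧ 0 < lam'' ρ :=
  stmt6_general n r hr hn H hH ρbar I q lam hI hq hqpos hlam
end

section
/- For all integers n > r ≥ 2 and every real ξ > 0: sinh(ξ)^n > (n−r)·cosh(ξ)^r·∫₀^ξ sinh(s)^{n−1}/cosh(s)^{r−1} ds. -/
/-!
Since `cosh² − sinh² = 1`, the derivative of `sinh^p / cosh^q` splits as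
`(p − q) · sinh^(p−1) / cosh^(q−1) + q · sinh^(p−1) / cosh^(q+1)`, whose second term is positive
for `s > 0` and `q > 0`. Integrating from `0`, where `sinh^p` vanishes, gives
`sinh ξ^p / cosh ξ^q > (p − q) ∫₀^ξ sinh^(p−1) / cosh^(q−1)`.
-/

open intervalIntegral

namespace Real

variable {p q : ℝ}

theorem continuous_sinh_rpow_div_cosh_rpow (hp : 0 ≤ p) :
    Continuous fun s => sinh s ^ p / cosh s ^ q :=
  (continuous_sinh.rpow_const fun _ => Or.inr hp).div
    (continuous_cosh.rpow_const fun s => Or.inl (cosh_pos s).ne')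
    fun s => (rpow_pos_of_pos (cosh_pos s) q).ne'

theorem hasDerivAt_sinh_rpow_div_cosh_rpow {s : ℝ} (hs : s ≠ 0) :
    HasDerivAt (fun t => sinh t ^ p / cosh t ^ q)
      ((p - q) * (sinh s ^ (p - 1) / cosh s ^ (q - 1))
        + q * (sinh s ^ (p - 1) / cosh s ^ (q + 1))) s := by
  have hsinh : sinh s ≠ 0 := sinh_eq_zero.not.mpr hs
  have hcosh : cosh s ≠ 0 := (cosh_pos s).ne'
  have hderiv := ((hasDerivAt_sinh s).rpow_const (p := p) (Or.inl hsinh)).div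
    ((hasDerivAt_cosh s).rpow_const (p := q) (Or.inl hcosh)) (rpow_pos_of_pos (cosh_pos s) q).ne'
  refine hderiv.congr_deriv ?_
  have hS : sinh s ^ p = sinh s ^ (p - 1) * sinh s := by
    rw [rpow_sub_one hsinh, div_mul_cancel₀ _ hsinh]
  have hC : cosh s ^ q = cosh s ^ (q - 1) * cosh s := by
    rw [rpow_sub_one hcosh, div_mul_cancel₀ _ hcosh]
  have hC' : cosh s ^ (q + 1) = cosh s ^ (q - 1) * cosh s ^ 2 := by
    rw [rpow_add_one hcosh, hC]; ring
  rw [hS, hC', hC]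
  field_simp
  linear_combination q * sinh s ^ (p - 1) * cosh_sq_sub_sinh_sq s

theorem mul_integral_sinh_rpow_div_cosh_rpow_lt (hp : 1 ≤ p) (hq : 0 < q) {ξ : ℝ} (hξ : 0 < ξ) :
    (p - q) * cosh ξ ^ q * ∫ s in (0 : ℝ)..ξ, sinh s ^ (p - 1) / cosh s ^ (q - 1)
      < sinh ξ ^ p := by
  have hg := continuous_sinh_rpow_div_cosh_rpow (q := q - 1) (sub_nonneg.mpr hp)
  have hh := continuous_sinh_rpow_div_cosh_rpow (q := q + 1) (sub_nonneg.mpr hp)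
  have hFTC := integral_eq_sub_of_hasDerivAt_of_le hξ.le
    (continuous_sinh_rpow_div_cosh_rpow (p := p) (q := q) (by linarith)).continuousOn
    (fun s hs => hasDerivAt_sinh_rpow_div_cosh_rpow hs.1.ne')
    (((continuous_const.mul hg).add (continuous_const.mul hh)).intervalIntegrable 0 ξ)
  rw [integral_add ((hg.intervalIntegrable 0 ξ).const_mul (p - q))
    ((hh.intervalIntegrable 0 ξ).const_mul q), integral_const_mul, integral_const_mul,
    sinh_zero, zero_rpow (by linarith), zero_div, sub_zero] at hFTC
  have hpos : 0 < ∫ s in (0 : ℝ)..ξ, sinh s ^ (p - 1) / cosh s ^ (q + 1) :=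
    intervalIntegral_pos_of_pos_on (hh.intervalIntegrable 0 ξ)
      (fun s hs => div_pos (rpow_pos_of_pos (sinh_pos_iff.mpr hs.1) _)
        (rpow_pos_of_pos (cosh_pos s) _)) hξ
  have hcosh : 0 < cosh ξ ^ q := rpow_pos_of_pos (cosh_pos ξ) q
  rw [eq_div_iff hcosh.ne'] at hFTC
  linarith [mul_pos (mul_pos hq hpos) hcosh]

end Real

/-- for `n > r ≥ 2` and `ξ > 0`,
`sinh(ξ)^n > (n−r)·cosh(ξ)^r·∫₀^ξ sinh(s)^(n−1)/cosh(s)^(r−1) ds`. -/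
theorem stmt9 (n r : ℕ) (hr : 2 ≤ r) (hnr : r < n) (ξ : ℝ) (hξ : 0 < ξ) :
    Real.sinh ξ ^ (n : ℝ)
      > ((n : ℝ) - r) * Real.cosh ξ ^ (r : ℝ) *
        ∫ s in (0 : ℝ)..ξ, Real.sinh s ^ ((n : ℝ) - 1) / Real.cosh s ^ ((r : ℝ) - 1) :=
  Real.mul_integral_sinh_rpow_div_cosh_rpow_lt (by norm_cast; omega) (by norm_cast; omega) hξ
end

section
/- Let n > r ≥ 2 be integers and let H be a real number with 0 < H ≤ (n−r)/n. Then for every ξ > 0: sinh(ξ)^{n−r} > n·H·∫₀^ξ sinh(s)^{n−1}/cosh(s)^{r−1} ds. Consequently q(ξ) = sinh(ξ)^{2(n−r)/r} − (n·H·I(ξ))^{2/r} > 0 for all ξ > 0, so the rotational profile λ(ρ) = ∫₀^ρ √( (n·H·I(ξ))^{2/r} / q(ξ) ) dξ is defined for every ρ ∈ [0, ∞). -/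
/-!
With `m = n - r`, write `sinh ξ ^ m = ∫₀^ξ m sinh ^ (m - 1) cosh`. Since
`sinh ^ (n - 1) / cosh ^ (r - 1) = sinh ^ (m - 1) cosh · tanh ^ r < sinh ^ (m - 1) cosh` on `(0, ∞)`
and `nH ≤ m`, this dominates `nH · I(ξ)` strictly.

For the profile, put `F = nH · I / sinh ^ m`, so that the integrand is `√(F^p / (1 - F^p))` with
`p = 2 / r`. The bound `I(ξ) ≤ ξ sinh(ξ) ^ (n - 1)` forces `F → 0` at `0`, so `F` is continuous on
`[0, ∞)` with values in `[0, 1)`, and the integrand is continuous on `[0, ρ]`. This includes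
`ξ = 0`, where the integrand is the junk value `0 / 0 = 0` and `F = 0`.
-/

open Real Set Filter Topology

noncomputable def sinhCoshIntegral (a b : ℕ) (ξ : ℝ) : ℝ :=
  ∫ s in (0 : ℝ)..ξ, sinh s ^ a / cosh s ^ b

section SinhCoshIntegral

variable (a b : ℕ)

theorem continuous_sinh_pow_div_cosh_pow :
    Continuous fun s : ℝ => sinh s ^ a / cosh s ^ b :=
  (continuous_sinh.pow a).div (continuous_cosh.pow b) fun s => (pow_pos (cosh_pos s) b).ne'

theorem continuous_sinhCoshIntegral : Continuous (sinhCoshIntegral a b) :=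
  intervalIntegral.continuous_primitive
    (fun _ _ => (continuous_sinh_pow_div_cosh_pow a b).intervalIntegrable _ _) 0

@[simp]
theorem sinhCoshIntegral_zero : sinhCoshIntegral a b 0 = 0 :=
  intervalIntegral.integral_same

theorem sinhCoshIntegral_sub_one_eq {n r : ℕ} (hn : 1 ≤ n) (hr : 1 ≤ r) (ξ : ℝ) :
    sinhCoshIntegral (n - 1) (r - 1) ξ
      = ∫ s in (0 : ℝ)..ξ, sinh s ^ ((n : ℝ) - 1) / cosh s ^ ((r : ℝ) - 1) := by
  simp only [sinhCoshIntegral, ← rpow_natCast, Nat.cast_sub hn, Nat.cast_sub hr, Nat.cast_one]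

variable {a b} {ξ : ℝ}

theorem sinhCoshIntegral_nonneg (hξ : 0 ≤ ξ) : 0 ≤ sinhCoshIntegral a b ξ :=
  intervalIntegral.integral_nonneg hξ fun s hs => by
    have := sinh_nonneg_iff.mpr hs.1
    positivity

theorem sinhCoshIntegral_le (hξ : 0 ≤ ξ) : sinhCoshIntegral a b ξ ≤ ξ * sinh ξ ^ a := by
  have hle : ∀ s ∈ Icc 0 ξ, sinh s ^ a / cosh s ^ b ≤ sinh ξ ^ a := fun s hs => by
    have hs0 := sinh_nonneg_iff.mpr hs.1
    calc sinh s ^ a / cosh s ^ b ≤ sinh s ^ a :=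
          div_le_self (by positivity) (one_le_pow₀ (one_le_cosh s))
      _ ≤ sinh ξ ^ a := pow_le_pow_left₀ hs0 (sinh_le_sinh.mpr hs.2) a
  simpa [sinhCoshIntegral] using intervalIntegral.integral_mono_on hξ
    ((continuous_sinh_pow_div_cosh_pow a b).intervalIntegrable 0 ξ)
    (intervalIntegrable_const (μ := MeasureTheory.volume)) hle

theorem sinh_pow_add_div_cosh_pow_lt (k : ℕ) {s : ℝ} (hs : 0 < s) :
    sinh s ^ (k + 1 + b) / cosh s ^ b < sinh s ^ k * cosh s := by
  have hsinh := sinh_pos_iff.mpr hs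
  have htanh : sinh s ^ (b + 1) < cosh s ^ (b + 1) :=
    pow_lt_pow_left₀ (sinh_lt_cosh s) hsinh.le (Nat.succ_ne_zero b)
  rw [div_lt_iff₀ (pow_pos (cosh_pos s) b)]
  calc sinh s ^ (k + 1 + b) = sinh s ^ k * sinh s ^ (b + 1) := by ring
    _ < sinh s ^ k * cosh s ^ (b + 1) := mul_lt_mul_of_pos_left htanh (pow_pos hsinh k)
    _ = sinh s ^ k * cosh s * cosh s ^ b := by ring

theorem mul_sinhCoshIntegral_lt {m : ℕ} {c : ℝ} (hm : 0 < m) (hc : c ≤ m) (hξ : 0 < ξ) :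
    c * sinhCoshIntegral (m + b) b ξ < sinh ξ ^ m := by
  obtain ⟨k, rfl⟩ : ∃ k, m = k + 1 := ⟨m - 1, by omega⟩
  have hderiv : ∀ s ∈ uIcc 0 ξ,
      HasDerivAt (fun t => sinh t ^ (k + 1)) ((k + 1 : ℕ) * (sinh s ^ k * cosh s)) s :=
    fun s _ => by simpa [mul_assoc] using (hasDerivAt_sinh s).fun_pow (k + 1)
  have hcont : Continuous fun s => ((k + 1 : ℕ) : ℝ) * (sinh s ^ k * cosh s) := by fun_prop
  calc c * sinhCoshIntegral (k + 1 + b) b ξ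
      ≤ ((k + 1 : ℕ) : ℝ) * sinhCoshIntegral (k + 1 + b) b ξ :=
        mul_le_mul_of_nonneg_right hc (sinhCoshIntegral_nonneg hξ.le)
    _ = ∫ s in (0 : ℝ)..ξ, ((k + 1 : ℕ) : ℝ) * (sinh s ^ (k + 1 + b) / cosh s ^ b) :=
        (intervalIntegral.integral_const_mul _ _).symm
    _ < ∫ s in (0 : ℝ)..ξ, ((k + 1 : ℕ) : ℝ) * (sinh s ^ k * cosh s) :=
        intervalIntegral.integral_lt_integral_of_continuousOn_of_le_of_exists_lt hξ
          ((continuous_const.mul (continuous_sinh_pow_div_cosh_pow _ _)).continuousOn)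
          hcont.continuousOn
          (fun s hs => (mul_lt_mul_of_pos_left (sinh_pow_add_div_cosh_pow_lt k hs.1)
            (by positivity)).le)
          ⟨ξ, right_mem_Icc.mpr hξ.le,
            mul_lt_mul_of_pos_left (sinh_pow_add_div_cosh_pow_lt k hξ) (by positivity)⟩
    _ = sinh ξ ^ (k + 1) := by
        rw [intervalIntegral.integral_eq_sub_of_hasDerivAt hderiv (hcont.intervalIntegrable _ _)]
        simp

theorem continuousOn_sinhCoshIntegral_div_sinh_pow {m : ℕ} (hma : m ≤ a) :
    ContinuousOn (fun ξ => sinhCoshIntegral a b ξ / sinh ξ ^ m) (Ici 0) := by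
  intro ξ hξ
  rcases (mem_Ici.mp hξ).eq_or_lt with rfl | hξ
  · have hbound : ∀ x ∈ Ici (0 : ℝ),
        sinhCoshIntegral a b x / sinh x ^ m ≤ x * sinh x ^ (a - m) := fun x hx => by
      rcases (mem_Ici.mp hx).eq_or_lt with rfl | hx
      · simp
      rw [div_le_iff₀ (pow_pos (sinh_pos_iff.mpr hx) m), mul_assoc, ← pow_add,
        Nat.sub_add_cancel hma]
      exact sinhCoshIntegral_le hx.le
    have hlim : Tendsto (fun x : ℝ => x * sinh x ^ (a - m)) (𝓝[Ici 0] 0) (𝓝 0) := by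
      have : Continuous fun x : ℝ => x * sinh x ^ (a - m) := by fun_prop
      simpa using (this.tendsto 0).mono_left nhdsWithin_le_nhds
    rw [ContinuousWithinAt, sinhCoshIntegral_zero, zero_div]
    refine tendsto_of_tendsto_of_tendsto_of_le_of_le' tendsto_const_nhds hlim
      (eventually_nhdsWithin_of_forall fun x hx => ?_) (eventually_nhdsWithin_of_forall hbound)
    have := sinhCoshIntegral_nonneg (a := a) (b := b) (mem_Ici.mp hx)
    have := sinh_nonneg_iff.mpr (mem_Ici.mp hx)
    positivity
  · exact ((continuous_sinhCoshIntegral a b).continuousAt.div (continuous_sinh.pow m).continuousAt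
      (pow_pos (sinh_pos_iff.mpr hξ) m).ne').continuousWithinAt

end SinhCoshIntegral

theorem continuousOn_sqrt_rpow_div_rpow_sub_rpow {A S : ℝ → ℝ} {p : ℝ} {s : Set ℝ}
    (hp : 0 < p) (hcont : ContinuousOn (fun x => A x / S x) s) (hA : ∀ x ∈ s, 0 ≤ A x)
    (hAS : ∀ x ∈ s, A x = 0 ∨ A x < S x) :
    ContinuousOn (fun x => √(A x ^ p / (S x ^ p - A x ^ p))) s := by
  have hg : ContinuousOn (fun t : ℝ => √(t ^ p / (1 - t ^ p))) (Ico 0 1) := by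
    refine continuous_sqrt.comp_continuousOn (ContinuousOn.div ?_ ?_ fun t ht => ?_)
    · exact continuousOn_id.rpow_const fun _ _ => Or.inr hp.le
    · exact continuousOn_const.sub (continuousOn_id.rpow_const fun _ _ => Or.inr hp.le)
    · exact (sub_pos.mpr (rpow_lt_one ht.1 ht.2 hp)).ne'
  have hmaps : MapsTo (fun x => A x / S x) s (Ico 0 1) := fun x hx => by
    rcases hAS x hx with h0 | hlt
    · simp [h0]
    · have hS := (hA x hx).trans_lt hlt
      exact ⟨div_nonneg (hA x hx) hS.le, (div_lt_one hS).mpr hlt⟩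
  refine (hg.comp hcont hmaps).congr fun x hx => ?_
  rcases hAS x hx with h0 | hlt
  · simp [h0, zero_rpow hp.ne']
  · have hS := (hA x hx).trans_lt hlt
    simp only [Function.comp_apply, div_rpow (hA x hx) hS.le]
    congr 1
    field_simp

/-- for `n > r ≥ 2` and `0 < H ≤ (n−r)/n`, one has
`sinh(ξ)^(n−r) > nH·I(ξ)` for all `ξ > 0`, hence `q > 0` on `(0,∞)` and the rotational
profile `λ(ρ)` is defined (the integral converges) for every `ρ ≥ 0`. -/
theorem stmt10 (n r : ℕ) (hr : 2 ≤ r) (hnr : r < n) (H : ℝ) (hH : 0 < H)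
    (hHle : H ≤ ((n : ℝ) - r) / n) (I q : ℝ → ℝ)
    (hI : ∀ ξ : ℝ, I ξ
      = ∫ s in (0 : ℝ)..ξ, Real.sinh s ^ ((n : ℝ) - 1) / Real.cosh s ^ ((r : ℝ) - 1))
    (hq : ∀ ξ : ℝ, q ξ
      = Real.sinh ξ ^ (2 * ((n : ℝ) - r) / r) - ((n : ℝ) * H * I ξ) ^ (2 / (r : ℝ))) :
    (∀ ξ : ℝ, 0 < ξ → Real.sinh ξ ^ ((n : ℝ) - r) > (n : ℝ) * H * I ξ) ∧
    (∀ ξ : ℝ, 0 < ξ → 0 < q ξ) ∧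
    (∀ ρ : ℝ, 0 ≤ ρ →
      IntervalIntegrable
        (fun ξ : ℝ => Real.sqrt ((((n : ℝ) * H * I ξ) ^ (2 / (r : ℝ))) / q ξ))
        MeasureTheory.volume 0 ρ) := by
  have hnr_cast : ((n - r : ℕ) : ℝ) = n - r := Nat.cast_sub hnr.le
  obtain rfl : I = sinhCoshIntegral (n - r + (r - 1)) (r - 1) := funext fun ξ => by
    rw [hI, show n - r + (r - 1) = n - 1 by omega,
      sinhCoshIntegral_sub_one_eq (by omega) (by omega)]
  set A := fun ξ => n * H * sinhCoshIntegral (n - r + (r - 1)) (r - 1) ξ with hA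
  have hA_nonneg : ∀ ξ ∈ Ici (0 : ℝ), 0 ≤ A ξ := fun ξ hξ =>
    mul_nonneg (by positivity) (sinhCoshIntegral_nonneg hξ)
  have hnH : (n : ℝ) * H ≤ (n - r : ℕ) := by
    rwa [hnr_cast, ← le_div_iff₀' (by exact_mod_cast (by omega : 0 < n))]
  have hA_lt : ∀ ξ, 0 < ξ → A ξ < sinh ξ ^ (n - r) := fun ξ hξ =>
    mul_sinhCoshIntegral_lt (by omega) hnH hξ
  have hp : 0 < 2 / (r : ℝ) := div_pos two_pos (by exact_mod_cast (by omega : 0 < r))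
  have hq_eq : ∀ ξ, 0 ≤ ξ → q ξ = (sinh ξ ^ (n - r)) ^ (2 / (r : ℝ)) - A ξ ^ (2 / (r : ℝ)) :=
    fun ξ hξ => by
      rw [hq, ← rpow_natCast, ← rpow_mul (sinh_nonneg_iff.mpr hξ), hnr_cast, mul_div_assoc',
        mul_comm]
  refine ⟨fun ξ hξ => ?_, fun ξ hξ => ?_, fun ρ hρ => ?_⟩
  · rw [← hnr_cast, rpow_natCast]
    exact hA_lt ξ hξ
  · rw [hq_eq ξ hξ.le, sub_pos]
    exact rpow_lt_rpow (hA_nonneg ξ hξ.le) (hA_lt ξ hξ) hp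
  have hA_div : ContinuousOn (fun ξ => A ξ / sinh ξ ^ (n - r)) (Ici 0) :=
    (continuousOn_const.mul (continuousOn_sinhCoshIntegral_div_sinh_pow (by omega))).congr
      fun ξ _ => mul_div_assoc _ _ _
  have hcont := continuousOn_sqrt_rpow_div_rpow_sub_rpow hp hA_div hA_nonneg fun ξ hξ => by
    rcases (mem_Ici.mp hξ).eq_or_lt with rfl | hξ
    · simp [hA]
    · exact Or.inr (hA_lt ξ hξ)
  have hsub : uIcc 0 ρ ⊆ Ici 0 := uIcc_of_le hρ ▸ Icc_subset_Ici_self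
  refine ContinuousOn.intervalIntegrable ((hcont.mono hsub).congr fun ξ hξ => ?_)
  rw [hq_eq ξ (hsub hξ)]
end

section
/- Let H > 0 and set ρ₀ = arcosh(e^{1/(2H)}). Then the function ξ ↦ √( 2H·ln(cosh ξ) / (1 − 2H·ln(cosh ξ)) ) is integrable on (0, ρ₀); that is, the improper integral ∫₀^{ρ₀} √( 2H·ln(cosh ξ) / (1 − 2H·ln(cosh ξ)) ) dξ converges to a finite value. -/
/-!
With `L = log ∘ cosh` and `L ρ₀ = 1/(2H)`, the integrand is `√(L ξ / (L ρ₀ - L ξ))`.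
`L` is convex with `L' = tanh`, so its tangent line at `ξ` gives both `L ξ ≤ ξ tanh ξ` and
`(ρ₀ - ξ) tanh ξ ≤ L ρ₀ - L ξ`. Hence the integrand is at most `√(ρ₀ / (ρ₀ - ξ))`, an integrable
singularity at `ρ₀`.
-/

open MeasureTheory Real Set

lemma ConvexOn.add_mul_sub_le_of_hasDerivAt {S : Set ℝ} {f : ℝ → ℝ} {f' x y : ℝ}
    (hf : ConvexOn ℝ S f) (hx : x ∈ S) (hy : y ∈ S) (hderiv : HasDerivAt f f' x) :
    f x + f' * (y - x) ≤ f y := by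
  rcases lt_trichotomy x y with hxy | rfl | hyx
  · have := hf.le_slope_of_hasDerivAt hx hy hxy hderiv
    rw [slope_def_field, le_div_iff₀ (sub_pos.2 hxy)] at this
    linarith
  · simp
  · have := hf.slope_le_of_hasDerivAt hy hx hyx hderiv
    rw [slope_def_field, div_le_iff₀ (sub_pos.2 hyx)] at this
    linarith

namespace Real

lemma monotone_tanh : Monotone tanh := by
  intro a b hab
  rw [tanh_eq_sinh_div_cosh, tanh_eq_sinh_div_cosh,
    div_le_div_iff₀ (cosh_pos a) (cosh_pos b)]
  have : sinh (a - b) ≤ 0 := sinh_nonpos_iff.2 (sub_nonpos.2 hab)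
  rw [sinh_sub] at this
  linarith

lemma tanh_pos {x : ℝ} (hx : 0 < x) : 0 < tanh x := by
  rw [tanh_eq_sinh_div_cosh]
  positivity

lemma hasDerivAt_log_cosh (x : ℝ) : HasDerivAt (fun x => log (cosh x)) (tanh x) x := by
  simpa [tanh_eq_sinh_div_cosh] using (hasDerivAt_cosh x).log (cosh_pos x).ne'

lemma convexOn_log_cosh : ConvexOn ℝ univ fun x => log (cosh x) := by
  refine Monotone.convexOn_univ_of_deriv (fun x => (hasDerivAt_log_cosh x).differentiableAt) ?_
  rw [funext fun x => (hasDerivAt_log_cosh x).deriv]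
  exact monotone_tanh

lemma log_cosh_div_sub_le {x ρ : ℝ} (hx : 0 < x) (hxρ : x < ρ) :
    log (cosh x) / (log (cosh ρ) - log (cosh x)) ≤ x / (ρ - x) := by
  have tangent := fun y => convexOn_log_cosh.add_mul_sub_le_of_hasDerivAt
    (mem_univ x) (mem_univ y) (hasDerivAt_log_cosh x)
  have at_zero : log (cosh x) ≤ tanh x * x := by
    have := tangent 0
    simp only [cosh_zero, log_one] at this
    linarith
  have at_ρ : tanh x * (ρ - x) ≤ log (cosh ρ) - log (cosh x) := by
    linarith [tangent ρ]
  have hpos : 0 < tanh x * (ρ - x) := mul_pos (tanh_pos hx) (sub_pos.2 hxρ)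
  calc log (cosh x) / (log (cosh ρ) - log (cosh x))
      ≤ tanh x * x / (tanh x * (ρ - x)) :=
        div_le_div₀ (mul_pos (tanh_pos hx) hx).le at_zero hpos at_ρ
    _ = x / (ρ - x) := mul_div_mul_left _ _ (tanh_pos hx).ne'

end Real

lemma integrableOn_Ioo_sub_rpow {a b r : ℝ} (hr : -1 < r) :
    IntegrableOn (fun x => (b - x) ^ r) (Ioo a b) := by
  have h := (intervalIntegral.intervalIntegrable_rpow' hr (a := 0) (b := b - a)).comp_sub_left b
  simp only [sub_zero, sub_sub_cancel] at h
  exact (intervalIntegrable_iff.mp h.symm).mono_set (Ioo_subset_Ioc_self.trans Ioc_subset_uIoc)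

theorem stmt13_general (H : ℝ) (hH : 0 < H) (ρ₀ : ℝ)
    (hρ₀ : Real.cosh ρ₀ = Real.exp (1 / (2 * H))) :
    IntegrableOn
      (fun ξ : ℝ => Real.sqrt (2 * H * Real.log (Real.cosh ξ) /
        (1 - 2 * H * Real.log (Real.cosh ξ))))
      (Set.Ioo 0 ρ₀) := by
  have hdenom : ∀ ξ, 1 - 2 * H * log (cosh ξ) = 2 * H * (log (cosh ρ₀) - log (cosh ξ)) := by
    intro ξ
    rw [hρ₀, log_exp]
    field_simp
  refine ((integrableOn_Ioo_sub_rpow (a := 0) (b := ρ₀) (r := -(1 / 2))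
    (by norm_num)).const_mul √ρ₀).mono'
    (by fun_prop : Measurable _).aestronglyMeasurable ?_
  filter_upwards [ae_restrict_mem measurableSet_Ioo] with ξ ⟨hξ, hξρ₀⟩
  have hgap : 0 < ρ₀ - ξ := sub_pos.2 hξρ₀
  rw [norm_of_nonneg (sqrt_nonneg _), hdenom, mul_div_mul_left _ _ (by positivity)]
  calc √(log (cosh ξ) / (log (cosh ρ₀) - log (cosh ξ)))
      ≤ √(ξ / (ρ₀ - ξ)) := sqrt_le_sqrt (log_cosh_div_sub_le hξ hξρ₀)
    _ ≤ √(ρ₀ / (ρ₀ - ξ)) := sqrt_le_sqrt (div_le_div_of_nonneg_right hξρ₀.le hgap.le)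
    _ = √ρ₀ * (ρ₀ - ξ) ^ (-(1 / 2) : ℝ) := by
      rw [sqrt_div' _ hgap.le, rpow_neg hgap.le, ← sqrt_eq_rpow, div_eq_mul_inv]

/-- for `H > 0` and `ρ₀ = arcosh(e^(1/(2H)))` (characterized by `ρ₀ > 0` and
`cosh ρ₀ = e^(1/(2H))`), the function `ξ ↦ √(2H·ln(cosh ξ)/(1 − 2H·ln(cosh ξ)))` is
integrable on `(0, ρ₀)`, i.e. the improper integral converges to a finite value. -/
theorem stmt13 (H : ℝ) (hH : 0 < H) (ρ₀ : ℝ) (hρ₀pos : 0 < ρ₀)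
    (hρ₀ : Real.cosh ρ₀ = Real.exp (1 / (2 * H))) :
    IntegrableOn
      (fun ξ : ℝ => Real.sqrt (2 * H * Real.log (Real.cosh ξ) /
        (1 - 2 * H * Real.log (Real.cosh ξ))))
      (Set.Ioo 0 ρ₀) :=
  stmt13_general H hH ρ₀ hρ₀
end
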